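/- Cutoff upper bound: Let P be a round-based register protocol with state set Q and error state q_err. If there exists k ∈ ℕ such that (q_err, k) is coverable (i.e., some abstract configuration reachable from σ_init contains (q_err,k)), then, letting N = 2·|Q|·(k+1)+1, there exists a concrete execution from the initial concrete configuration with N processes reaching a configuration whose location multiset contains (q_err, k). -/
import Mathlib


open scoped Classical

/-- Actions of a round-based register protocol: round increment, read of value `x`
from register `α` of round `k - i`, and write of value `x` to register `α` of the
current round. -/
inductive Act (dim : ℕ) (D : Type) where
  | incr : Act dim D
  | read (i : ℕ) (α : Fin dim) (x : D) : Act dim D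
  | write (α : Fin dim) (x : D) : Act dim D

/-- A round-based register protocol. -/
structure Protocol (Q D : Type) (dim : ℕ) where
  q0 : Q
  d0 : D
  v : ℕ
  T : Set (Q × Act dim D × Q)
  read_le : ∀ q i α x q', (q, Act.read i α x, q') ∈ T → i ≤ v
  write_ne : ∀ q α x q', (q, Act.write α x, q') ∈ T → x ≠ d0

/-- A move: a transition together with the round on which it is performed. -/
abbrev Move (Q D : Type) (dim : ℕ) := (Q × Act dim D × Q) × ℕ

/-- A concrete configuration: a finitely supported multiset of locations and a
valuation of all registers. -/
structure Conc (Q D : Type) (dim : ℕ) where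
  loc : (Q × ℕ) →₀ ℕ
  reg : ℕ → Fin dim → D

variable {Q D : Type} {dim : ℕ}

/-- Value read from register `α` of round `k - i` (registers of negative rounds
hold the initial value). -/
def regVal (P : Protocol Q D dim) (γ : Conc Q D dim) (k i : ℕ) (α : Fin dim) : D :=
  if i ≤ k then γ.reg (k - i) α else P.d0

/-- Updating register `α` of round `k` to value `x`. -/
def updReg (r : ℕ → Fin dim → D) (k : ℕ) (α : Fin dim) (x : D) : ℕ → Fin dim → D :=
  fun k' α' => if k' = k ∧ α' = α then x else r k' α'

/-- Concrete step relation of a round-based register protocol. -/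
inductive ConcStep [DecidableEq Q] (P : Protocol Q D dim) :
    Conc Q D dim → Move Q D dim → Conc Q D dim → Prop where
  | incr {q q' : Q} {k : ℕ} {γ γ' : Conc Q D dim} :
      (q, Act.incr, q') ∈ P.T → 0 < γ.loc (q, k) →
      γ'.loc = γ.loc - Finsupp.single (q, k) 1 + Finsupp.single (q', k + 1) 1 →
      γ'.reg = γ.reg →
      ConcStep P γ ((q, Act.incr, q'), k) γ'
  | read {q q' : Q} {k i : ℕ} {α : Fin dim} {x : D} {γ γ' : Conc Q D dim} :
      (q, Act.read i α x, q') ∈ P.T → 0 < γ.loc (q, k) →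
      regVal P γ k i α = x →
      γ'.loc = γ.loc - Finsupp.single (q, k) 1 + Finsupp.single (q', k) 1 →
      γ'.reg = γ.reg →
      ConcStep P γ ((q, Act.read i α x, q'), k) γ'
  | write {q q' : Q} {k : ℕ} {α : Fin dim} {x : D} {γ γ' : Conc Q D dim} :
      (q, Act.write α x, q') ∈ P.T → 0 < γ.loc (q, k) →
      γ'.loc = γ.loc - Finsupp.single (q, k) 1 + Finsupp.single (q', k) 1 →
      γ'.reg = updReg γ.reg k α x →
      ConcStep P γ ((q, Act.write α x, q'), k) γ'

/-- Concrete reachability. -/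
def ConcReach [DecidableEq Q] (P : Protocol Q D dim) : Conc Q D dim → Conc Q D dim → Prop :=
  Relation.ReflTransGen (fun γ γ' => ∃ m, ConcStep P γ m γ')

/-- Initial concrete configuration with `n` processes. -/
noncomputable def Conc.init [DecidableEq Q] (P : Protocol Q D dim) (n : ℕ) : Conc Q D dim :=
  ⟨Finsupp.single (P.q0, 0) n, fun _ _ => P.d0⟩

/-- Number of processes of a concrete configuration. -/
def Conc.size (γ : Conc Q D dim) : ℕ := γ.loc.sum fun _ n => n

/-- Support of the location multiset of a concrete configuration. -/
def Conc.supp (γ : Conc Q D dim) : Set (Q × ℕ) := {l | 0 < γ.loc l}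

/-- The set of non-blank registers of a concrete configuration. -/
def Conc.nonBlank (P : Protocol Q D dim) (γ : Conc Q D dim) : Set (ℕ × Fin dim) :=
  {r | γ.reg r.1 r.2 ≠ P.d0}

/-- An abstract configuration: a set of locations and a set of written registers. -/
structure Abs (Q : Type) (dim : ℕ) where
  S : Set (Q × ℕ)
  W : Set (ℕ × Fin dim)

/-- Abstract step relation. -/
inductive AbsStep (P : Protocol Q D dim) :
    Abs Q dim → Move Q D dim → Abs Q dim → Prop where
  | incr {σ : Abs Q dim} {q q' : Q} {k : ℕ} :
      (q, Act.incr, q') ∈ P.T → (q, k) ∈ σ.S →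
      AbsStep P σ ((q, Act.incr, q'), k) ⟨σ.S ∪ {(q', k + 1)}, σ.W⟩
  | readBlank {σ : Abs Q dim} {q q' : Q} {k i : ℕ} {α : Fin dim} :
      (q, Act.read i α P.d0, q') ∈ P.T → (q, k) ∈ σ.S →
      (i ≤ k → (k - i, α) ∉ σ.W) →
      AbsStep P σ ((q, Act.read i α P.d0, q'), k) ⟨σ.S ∪ {(q', k)}, σ.W⟩
  | readVal {σ : Abs Q dim} {q q' q1 q2 : Q} {k i : ℕ} {α : Fin dim} {x : D} :
      x ≠ P.d0 → (q, Act.read i α x, q') ∈ P.T → (q, k) ∈ σ.S →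
      i ≤ k → (k - i, α) ∈ σ.W →
      (q1, Act.write α x, q2) ∈ P.T → (q1, k - i) ∈ σ.S → (q2, k - i) ∈ σ.S →
      AbsStep P σ ((q, Act.read i α x, q'), k) ⟨σ.S ∪ {(q', k)}, σ.W⟩
  | write {σ : Abs Q dim} {q q' : Q} {k : ℕ} {α : Fin dim} {x : D} :
      (q, Act.write α x, q') ∈ P.T → (q, k) ∈ σ.S →
      AbsStep P σ ((q, Act.write α x, q'), k) ⟨σ.S ∪ {(q', k)}, σ.W ∪ {(k, α)}⟩

/-- Abstract reachability. -/
def AbsReach (P : Protocol Q D dim) : Abs Q dim → Abs Q dim → Prop :=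
  Relation.ReflTransGen (fun σ σ' => ∃ m, AbsStep P σ m σ')

/-- The initial abstract configuration. -/
def Abs.init (P : Protocol Q D dim) : Abs Q dim := ⟨{(P.q0, 0)}, ∅⟩

/-- Abstract execution along a list of moves. -/
inductive AbsRun (P : Protocol Q D dim) : Abs Q dim → List (Move Q D dim) → Abs Q dim → Prop
  | nil (σ : Abs Q dim) : AbsRun P σ [] σ
  | cons {σ σ' σ'' : Abs Q dim} {m : Move Q D dim} {ms : List (Move Q D dim)} :
      AbsStep P σ m σ' → AbsRun P σ' ms σ'' → AbsRun P σ (m :: ms) σ''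

/-- First-write order of a schedule, given a set of already written registers. -/
noncomputable def fwo (W : Set (ℕ × Fin dim)) : List (Move Q D dim) → List (ℕ × Fin dim)
  | [] => []
  | ((_, Act.write α _, _), k) :: ms =>
      if (k, α) ∈ W then fwo W ms else (k, α) :: fwo (W ∪ {(k, α)}) ms
  | _ :: ms => fwo W ms

/-- Projection of a sequence of registers onto those whose round lies in `[k - v, k]`. -/
def winproj (v k : ℕ) (F : List (ℕ × Fin dim)) : List (ℕ × Fin dim) :=
  F.filter (fun r => decide (k - v ≤ r.1 ∧ r.1 ≤ k))

section CutoffAux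

/-- A concrete configuration is "blankish" w.r.t. a set `W` of registers if every
register holding a non-initial value belongs to `W`. -/
def Blankish (P : Protocol Q D dim) (W : Set (ℕ × Fin dim)) (γ : Conc Q D dim) : Prop :=
  ∀ (j : ℕ) (α : Fin dim), γ.reg j α ≠ P.d0 → (j, α) ∈ W

lemma absStep_S_mono {P : Protocol Q D dim} {σ σ' : Abs Q dim} {m : Move Q D dim}
    (h : AbsStep P σ m σ') : σ.S ⊆ σ'.S := by
  cases h <;> exact Set.subset_union_left

lemma absStep_W_mono {P : Protocol Q D dim} {σ σ' : Abs Q dim} {m : Move Q D dim}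
    (h : AbsStep P σ m σ') : σ.W ⊆ σ'.W := by
  cases h <;> first | exact le_refl _ | exact Set.subset_union_left

lemma absReach_S_mono {P : Protocol Q D dim} {σ σ' : Abs Q dim}
    (h : AbsReach P σ σ') : σ.S ⊆ σ'.S := by
  induction h with
  | refl => exact le_refl _
  | tail hstep h ih =>
    obtain ⟨m, hm⟩ := h
    exact ih.trans (absStep_S_mono hm)

lemma loc_move [DecidableEq Q] (L : (Q × ℕ) →₀ ℕ) (s t : Q × ℕ) (n : ℕ) (ℓ : Q × ℕ) :
    (L - Finsupp.single s n + Finsupp.single t n) ℓ =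
      L ℓ - (if s = ℓ then n else 0) + (if t = ℓ then n else 0) := by
  rw [Finsupp.add_apply, Finsupp.tsub_apply, Finsupp.single_apply, Finsupp.single_apply]

lemma updReg_idem (r : ℕ → Fin dim → D) (k : ℕ) (α : Fin dim) (x : D) :
    updReg (updReg r k α x) k α x = updReg r k α x := by
  funext k' α'
  unfold updReg
  by_cases h : k' = k ∧ α' = α <;> simp [h]

/-- Moving `n` processes from `s` to `t`, one at a time, when each single move
is a concrete step preserving the valuation `R`. -/
lemma bulk_move [DecidableEq Q] {P : Protocol Q D dim} (m : Move Q D dim)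
    (s t : Q × ℕ) (hst : s ≠ t) (R : ℕ → Fin dim → D)
    (H : ∀ L : (Q × ℕ) →₀ ℕ, 0 < L s →
      ConcStep P ⟨L, R⟩ m ⟨L - Finsupp.single s 1 + Finsupp.single t 1, R⟩) :
    ∀ (n : ℕ) (L : (Q × ℕ) →₀ ℕ), n ≤ L s →
      ∃ L', ConcReach P ⟨L, R⟩ ⟨L', R⟩ ∧
        ∀ ℓ, L' ℓ = L ℓ - (if s = ℓ then n else 0) + (if t = ℓ then n else 0) := by
  intro n
  induction n with
  | zero =>
    intro L _
    exact ⟨L, Relation.ReflTransGen.refl, by intro ℓ; simp⟩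
  | succ n ih =>
    intro L hL
    have hpos : 0 < L s := by omega
    set L1 : (Q × ℕ) →₀ ℕ := L - Finsupp.single s 1 + Finsupp.single t 1 with hL1
    have hL1s : L1 s = L s - 1 := by
      rw [hL1, loc_move]
      simp [Ne.symm hst]
    obtain ⟨L', hreach, hpt⟩ := ih L1 (by omega)
    refine ⟨L', Relation.ReflTransGen.head ⟨m, H L hpos⟩ hreach, ?_⟩
    intro ℓ
    have h1 : L1 ℓ = L ℓ - (if s = ℓ then 1 else 0) + (if t = ℓ then 1 else 0) := by
      rw [hL1]; exact loc_move L s t 1 ℓ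
    have h2 := hpt ℓ
    by_cases hs : s = ℓ
    · subst hs
      simp [Ne.symm hst] at h1 h2 ⊢
      omega
    · by_cases ht : t = ℓ
      · subst ht
        simp [hs] at h1 h2 ⊢
        omega
      · simp [hs, ht] at h1 h2 ⊢
        omega

/-- Generic transfer of a demand across one abstract step: `s` is the source
location, `t` the created location, `(w1, w2)` an optional (when `e = 1`) writer
witness pair. -/
lemma transfer [DecidableEq Q] {P : Protocol Q D dim} {W W' : Set (ℕ × Fin dim)}
    (hWW : W ⊆ W') {S : Set (Q × ℕ)} {kk : ℕ} (s t w1 w2 : Q × ℕ) (e : ℕ)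
    (hsS : s ∈ S) (hw1S : w1 ∈ S) (hw2S : w2 ∈ S)
    (hk2 : t.2 ≤ kk → s.2 ≤ kk ∧ w1.2 ≤ kk) (he : e ≤ 1)
    (c'' : Multiset (Q × ℕ)) (hsupp : ∀ ℓ ∈ c'', ℓ ∈ S ∪ {t} ∧ ℓ.2 ≤ kk)
    (SIM : t ∉ S → c''.count t ≠ 0 → ∀ γ : Conc Q D dim, Blankish P W γ →
      (∀ ℓ, (if s = ℓ then c''.count t else 0) + (if w1 = ℓ then e else 0) ≤ γ.loc ℓ) →
      ∃ γ', ConcReach P γ γ' ∧ Blankish P W' γ' ∧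
        ∀ ℓ, γ.loc ℓ - (if s = ℓ then c''.count t else 0) - (if w1 = ℓ then e else 0)
          + (if t = ℓ then c''.count t else 0) + (if w2 = ℓ then e else 0) ≤ γ'.loc ℓ) :
    ∃ c : Multiset (Q × ℕ), (∀ ℓ ∈ c, ℓ ∈ S ∧ ℓ.2 ≤ kk) ∧
      (Multiset.card c ≤ Multiset.card c'' ∨
        ∃ ℓ' : Q × ℕ, ℓ' ∈ S ∪ {t} ∧ ℓ' ∉ S ∧ ℓ'.2 ≤ kk ∧
          Multiset.card c ≤ Multiset.card c'' + 1) ∧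
      ∀ γ : Conc Q D dim, Blankish P W γ → (∀ ℓ, c.count ℓ ≤ γ.loc ℓ) →
        ∃ γ', ConcReach P γ γ' ∧ Blankish P W' γ' ∧ ∀ ℓ, c''.count ℓ ≤ γ'.loc ℓ := by
  by_cases htS : t ∈ S
  · refine ⟨c'', ?_, Or.inl le_rfl, ?_⟩
    · intro ℓ hl
      obtain ⟨hS, hk⟩ := hsupp ℓ hl
      refine ⟨?_, hk⟩
      rcases hS with h | h
      · exact h
      · rwa [show ℓ = t from h]
    · intro γ hbl hdem
      exact ⟨γ, Relation.ReflTransGen.refl, fun j α h => hWW (hbl j α h), hdem⟩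
  · by_cases hn0 : c''.count t = 0
    · refine ⟨c'', ?_, Or.inl le_rfl, ?_⟩
      · intro ℓ hl
        obtain ⟨hS, hk⟩ := hsupp ℓ hl
        refine ⟨?_, hk⟩
        rcases hS with h | h
        · exact h
        · exfalso
          have := Multiset.count_pos.mpr hl
          rw [show ℓ = t from h, hn0] at this
          exact Nat.lt_irrefl 0 this
      · intro γ hbl hdem
        exact ⟨γ, Relation.ReflTransGen.refl, fun j α h => hWW (hbl j α h), hdem⟩
    · have htmem : t ∈ c'' := Multiset.count_pos.mp (Nat.pos_of_ne_zero hn0)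
      have htk : t.2 ≤ kk := (hsupp t htmem).2
      obtain ⟨hsk, hw1k⟩ := hk2 htk
      have nst : s ≠ t := fun h => htS (h ▸ hsS)
      have nw1t : w1 ≠ t := fun h => htS (h ▸ hw1S)
      set cc : Multiset (Q × ℕ) := c'' - Multiset.replicate (c''.count t) t
        + Multiset.replicate (c''.count t) s + Multiset.replicate e w1 with hcc
      have hcount : ∀ ℓ, cc.count ℓ = (c''.count ℓ - (if t = ℓ then c''.count t else 0))
          + (if s = ℓ then c''.count t else 0) + (if w1 = ℓ then e else 0) := by
        intro ℓ
        rw [hcc]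
        simp [Multiset.count_add, Multiset.count_sub, Multiset.count_replicate]
      refine ⟨cc, ?_, ?_, ?_⟩
      · intro ℓ hl
        have hpos := Multiset.count_pos.mpr hl
        rw [hcount ℓ] at hpos
        by_cases h1 : s = ℓ
        · rw [← h1]; exact ⟨hsS, hsk⟩
        · by_cases h2 : w1 = ℓ
          · rw [← h2]; exact ⟨hw1S, hw1k⟩
          · by_cases h3 : t = ℓ
            · exfalso
              rw [← h3] at hpos
              simp [nst, nw1t] at hpos
            · have hmem : ℓ ∈ c'' := by
                refine Multiset.count_pos.mp ?_
                simp [h1, h2, h3] at hpos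
                omega
              obtain ⟨hS, hk⟩ := hsupp ℓ hmem
              refine ⟨?_, hk⟩
              rcases hS with h | h
              · exact h
              · exact absurd (show ℓ = t from h).symm h3
      · right
        have hle : Multiset.replicate (c''.count t) t ≤ c'' :=
          Multiset.le_count_iff_replicate_le.mp le_rfl
        have h2 := congrArg Multiset.card (tsub_add_cancel_of_le hle)
        refine ⟨t, Or.inr rfl, htS, htk, ?_⟩
        rw [hcc]
        simp only [Multiset.card_add, Multiset.card_replicate] at h2 ⊢
        omega
      · intro γ hbl hdem
        have hlow : ∀ ℓ, (if s = ℓ then c''.count t else 0)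
            + (if w1 = ℓ then e else 0) ≤ γ.loc ℓ := by
          intro ℓ
          have := hdem ℓ
          rw [hcount ℓ] at this
          omega
        obtain ⟨γ', hreach, hbl', hpt⟩ := SIM htS hn0 γ hbl hlow
        refine ⟨γ', hreach, hbl', ?_⟩
        intro ℓ
        have h1 := hdem ℓ
        rw [hcount ℓ] at h1
        have h2 := hpt ℓ
        have h3 : (if t = ℓ then c''.count t else 0) = 0 ∨
            ((if t = ℓ then c''.count t else 0) = c''.count t
              ∧ c''.count ℓ = c''.count t) := by
          by_cases h : t = ℓ
          · right
            rw [if_pos h, ← h]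
            exact ⟨rfl, rfl⟩
          · left
            rw [if_neg h]
        omega

/-- One-step backward simulation: from a demand on the target abstract
configuration, produce a demand on the source together with a concrete
simulation of the step. -/
lemma step_sim [DecidableEq Q] {P : Protocol Q D dim} (kk : ℕ)
    {σ σ' : Abs Q dim} {m : Move Q D dim} (hs : AbsStep P σ m σ')
    (c'' : Multiset (Q × ℕ)) (hsupp : ∀ ℓ ∈ c'', ℓ ∈ σ'.S ∧ ℓ.2 ≤ kk) :
    ∃ c : Multiset (Q × ℕ), (∀ ℓ ∈ c, ℓ ∈ σ.S ∧ ℓ.2 ≤ kk) ∧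
      (Multiset.card c ≤ Multiset.card c'' ∨
        ∃ ℓ' : Q × ℕ, ℓ' ∈ σ'.S ∧ ℓ' ∉ σ.S ∧ ℓ'.2 ≤ kk ∧
          Multiset.card c ≤ Multiset.card c'' + 1) ∧
      ∀ γ : Conc Q D dim, Blankish P σ.W γ → (∀ ℓ, c.count ℓ ≤ γ.loc ℓ) →
        ∃ γ', ConcReach P γ γ' ∧ Blankish P σ'.W γ' ∧ ∀ ℓ, c''.count ℓ ≤ γ'.loc ℓ := by
  cases hs with
  | @incr q q' j hT hmem =>
    refine transfer le_rfl (q, j) (q', j + 1) (q, j) (q, j) 0 hmem hmem hmem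
      (fun h => ⟨Nat.le_of_succ_le h, Nat.le_of_succ_le h⟩) (by omega) c'' hsupp ?_
    intro htS hne γ hbl hlow
    have hst : (q, j) ≠ (q', j + 1) := fun h => htS (h ▸ hmem)
    have hns : c''.count (q', j + 1) ≤ γ.loc (q, j) := by
      have := hlow (q, j)
      simp at this
      omega
    obtain ⟨L', hreach, hpt⟩ := bulk_move ((q, Act.incr, q'), j) (q, j) (q', j + 1) hst γ.reg
      (fun L hL => ConcStep.incr hT hL rfl rfl) (c''.count (q', j + 1)) γ.loc hns
    refine ⟨⟨L', γ.reg⟩, hreach, hbl, ?_⟩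
    intro ℓ
    change _ ≤ L' ℓ
    have h1 := hpt ℓ
    have h0 : (if (q, j) = ℓ then (0:ℕ) else 0) = 0 := ite_self 0
    omega
  | @readBlank q q' j i α hT hmem hW =>
    refine transfer le_rfl (q, j) (q', j) (q, j) (q, j) 0 hmem hmem hmem
      (fun h => ⟨h, h⟩) (by omega) c'' hsupp ?_
    intro htS hne γ hbl hlow
    have hst : (q, j) ≠ (q', j) := fun h => htS (h ▸ hmem)
    have hns : c''.count (q', j) ≤ γ.loc (q, j) := by
      have := hlow (q, j)
      simp at this
      omega
    have hrv : ∀ L : (Q × ℕ) →₀ ℕ, regVal P ⟨L, γ.reg⟩ j i α = P.d0 := by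
      intro L
      unfold regVal
      by_cases hij : i ≤ j
      · rw [if_pos hij]
        by_contra hc
        exact hW hij (hbl _ _ hc)
      · rw [if_neg hij]
    obtain ⟨L', hreach, hpt⟩ := bulk_move ((q, Act.read i α P.d0, q'), j) (q, j) (q', j) hst γ.reg
      (fun L hL => ConcStep.read hT hL (hrv L) rfl rfl) (c''.count (q', j)) γ.loc hns
    refine ⟨⟨L', γ.reg⟩, hreach, hbl, ?_⟩
    intro ℓ
    change _ ≤ L' ℓ
    have h1 := hpt ℓ
    have h0 : (if (q, j) = ℓ then (0:ℕ) else 0) = 0 := ite_self 0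
    omega
  | @write q q' j α x hT hmem =>
    refine transfer Set.subset_union_left (q, j) (q', j) (q, j) (q, j) 0 hmem hmem hmem
      (fun h => ⟨h, h⟩) (by omega) c'' hsupp ?_
    intro htS hne γ hbl hlow
    have hst : (q, j) ≠ (q', j) := fun h => htS (h ▸ hmem)
    have hlowq := hlow (q, j)
    simp at hlowq
    have hpos : 0 < γ.loc (q, j) := by omega
    set R : ℕ → Fin dim → D := updReg γ.reg j α x with hR
    have hstep1 : ConcStep P γ ((q, Act.write α x, q'), j)
        ⟨γ.loc - Finsupp.single (q, j) 1 + Finsupp.single (q', j) 1, R⟩ :=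
      ConcStep.write hT hpos rfl hR
    have h1s : ((γ.loc - Finsupp.single (q, j) 1 + Finsupp.single (q', j) 1 : (Q × ℕ) →₀ ℕ)) (q, j)
        = γ.loc (q, j) - 1 := by
      rw [loc_move]
      simp [Ne.symm hst]
    obtain ⟨L', hreach, hpt⟩ := bulk_move ((q, Act.write α x, q'), j) (q, j) (q', j) hst R
      (fun L hL => ConcStep.write hT hL rfl (updReg_idem γ.reg j α x).symm)
      (c''.count (q', j) - 1)
      (γ.loc - Finsupp.single (q, j) 1 + Finsupp.single (q', j) 1)
      (by rw [h1s]; omega)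
    refine ⟨⟨L', R⟩, Relation.ReflTransGen.head ⟨_, hstep1⟩ hreach, ?_, ?_⟩
    · intro j' α' hne'
      by_cases h : j' = j ∧ α' = α
      · exact Set.mem_union_right _ (by rw [h.1, h.2]; rfl)
      · exact Set.mem_union_left _ (hbl j' α' (by simpa [hR, updReg, h] using hne'))
    · intro ℓ
      change _ ≤ L' ℓ
      have h1 := hpt ℓ
      have h2 := loc_move γ.loc (q, j) (q', j) 1 ℓ
      have h3 := hlow ℓ
      have h0 : (if (q, j) = ℓ then (0:ℕ) else 0) = 0 := ite_self 0
      have e1 : (if (q, j) = ℓ then c''.count (q', j) else 0)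
          = (if (q, j) = ℓ then 1 else 0) + (if (q, j) = ℓ then c''.count (q', j) - 1 else 0) := by
        by_cases h : (q, j) = ℓ
        · simp only [if_pos h]; omega
        · simp only [if_neg h]
      have e2 : (if (q', j) = ℓ then c''.count (q', j) else 0)
          = (if (q', j) = ℓ then 1 else 0) + (if (q', j) = ℓ then c''.count (q', j) - 1 else 0) := by
        by_cases h : (q', j) = ℓ
        · simp only [if_pos h]; omega
        · simp only [if_neg h]
      omega
  | @readVal q q' q1 q2 j i α x hx hT hmem hik hW hTw hw1 hw2 =>
    refine transfer le_rfl (q, j) (q', j) (q1, j - i) (q2, j - i) 1 hmem hw1 hw2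
      (fun h => ⟨h, le_trans (Nat.sub_le j i) h⟩) le_rfl c'' hsupp ?_
    intro htS hne γ hbl hlow
    have hst : (q, j) ≠ (q', j) := fun h => htS (h ▸ hmem)
    have hw1pos : 0 < γ.loc (q1, j - i) := by
      have := hlow (q1, j - i)
      simp at this
      omega
    set R : ℕ → Fin dim → D := updReg γ.reg (j - i) α x with hR
    have hstep1 : ConcStep P γ ((q1, Act.write α x, q2), j - i)
        ⟨γ.loc - Finsupp.single (q1, j - i) 1 + Finsupp.single (q2, j - i) 1, R⟩ :=
      ConcStep.write hTw hw1pos rfl hR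
    have hrv : ∀ L : (Q × ℕ) →₀ ℕ, regVal P ⟨L, R⟩ j i α = x := by
      intro L
      unfold regVal
      rw [if_pos hik, hR]
      simp [updReg]
    have hbulkpre : c''.count (q', j)
        ≤ ((γ.loc - Finsupp.single (q1, j - i) 1 + Finsupp.single (q2, j - i) 1 : (Q × ℕ) →₀ ℕ)) (q, j) := by
      rw [loc_move]
      have h4 := hlow (q, j)
      have h5 : (if (q, j) = (q, j) then c''.count (q', j) else 0) = c''.count (q', j) :=
        if_pos rfl
      omega
    obtain ⟨L', hreach, hpt⟩ := bulk_move ((q, Act.read i α x, q'), j) (q, j) (q', j) hst R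
      (fun L hL => ConcStep.read hT hL (hrv L) rfl rfl) (c''.count (q', j))
      (γ.loc - Finsupp.single (q1, j - i) 1 + Finsupp.single (q2, j - i) 1) hbulkpre
    refine ⟨⟨L', R⟩, Relation.ReflTransGen.head ⟨_, hstep1⟩ hreach, ?_, ?_⟩
    · intro j' α' hne'
      by_cases h : j' = j - i ∧ α' = α
      · rw [h.1, h.2]
        exact hW
      · exact hbl j' α' (by simpa [hR, updReg, h] using hne')
    · intro ℓ
      change _ ≤ L' ℓ
      have h1 := hpt ℓ
      have h2 := loc_move γ.loc (q1, j - i) (q2, j - i) 1 ℓ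
      have h3 := hlow ℓ
      omega

lemma win_finite [Fintype Q] (kk : ℕ) : ({ℓ : Q × ℕ | ℓ.2 ≤ kk}).Finite :=
  ((Set.finite_univ (α := Q)).prod (Set.finite_Iic kk)).subset fun _ h => ⟨trivial, h⟩

lemma win_ncard [Fintype Q] (kk : ℕ) :
    ({ℓ : Q × ℕ | ℓ.2 ≤ kk}).ncard ≤ Fintype.card Q * (kk + 1) := by
  have hsub : {ℓ : Q × ℕ | ℓ.2 ≤ kk} ⊆ ↑(Finset.univ (α := Q) ×ˢ Finset.Iic kk) := by
    intro ℓ h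
    simp only [Finset.coe_product, Set.mem_prod, Finset.coe_univ, Set.mem_univ, true_and,
      Finset.coe_Iic, Set.mem_Iic]
    exact h
  have := Set.ncard_le_ncard hsub (Finset.univ ×ˢ Finset.Iic kk).finite_toSet
  rwa [Set.ncard_coe_finset, Finset.card_product, Finset.card_univ, Nat.card_Iic] at this

/-- Backward propagation of demands along an abstract run, together with the
corresponding concrete simulation. -/
lemma key_sim [DecidableEq Q] [Fintype Q] {P : Protocol Q D dim} (kk : ℕ)
    {σ σf : Abs Q dim} (h : AbsReach P σ σf) :
    ∀ c' : Multiset (Q × ℕ), (∀ ℓ ∈ c', ℓ ∈ σf.S ∧ ℓ.2 ≤ kk) →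
    ∃ c : Multiset (Q × ℕ), (∀ ℓ ∈ c, ℓ ∈ σ.S ∧ ℓ.2 ≤ kk) ∧
      Multiset.card c ≤ Multiset.card c'
        + ((σf.S \ σ.S) ∩ {ℓ : Q × ℕ | ℓ.2 ≤ kk}).ncard ∧
      ∀ γ : Conc Q D dim, Blankish P σ.W γ → (∀ ℓ, c.count ℓ ≤ γ.loc ℓ) →
        ∃ γ', ConcReach P γ γ' ∧ Blankish P σf.W γ' ∧ ∀ ℓ, c'.count ℓ ≤ γ'.loc ℓ := by
  induction h using Relation.ReflTransGen.head_induction_on with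
  | refl =>
    intro c' hc'
    refine ⟨c', hc', by simp, ?_⟩
    intro γ hbl hdem
    exact ⟨γ, Relation.ReflTransGen.refl, hbl, hdem⟩
  | head hstep hrest ih =>
    rename_i σ0 σmid
    intro c' hc'
    obtain ⟨m, hm⟩ := hstep
    obtain ⟨c'', hsupp'', hcard'', hsim''⟩ := ih c' hc'
    obtain ⟨c, hsupp, hcard, hsim⟩ := step_sim kk hm c'' hsupp''
    have hWfin : ({ℓ : Q × ℕ | ℓ.2 ≤ kk}).Finite := win_finite kk
    refine ⟨c, hsupp, ?_, ?_⟩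
    · rcases hcard with h | ⟨ℓ', hℓmid, hℓS, hℓk, hc1⟩
      · have hsub : (σf.S \ σmid.S) ∩ {ℓ : Q × ℕ | ℓ.2 ≤ kk}
            ⊆ (σf.S \ σ0.S) ∩ {ℓ : Q × ℕ | ℓ.2 ≤ kk} := by
          intro y hy
          exact ⟨⟨hy.1.1, fun hc => hy.1.2 (absStep_S_mono hm hc)⟩, hy.2⟩
        have := Set.ncard_le_ncard hsub (hWfin.subset Set.inter_subset_right)
        omega
      · have hℓf : ℓ' ∈ σf.S := absReach_S_mono hrest hℓmid
        have hnotmem : ℓ' ∉ (σf.S \ σmid.S) ∩ {ℓ : Q × ℕ | ℓ.2 ≤ kk} :=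
          fun hc => hc.1.2 hℓmid
        have hsub : insert ℓ' ((σf.S \ σmid.S) ∩ {ℓ : Q × ℕ | ℓ.2 ≤ kk})
            ⊆ (σf.S \ σ0.S) ∩ {ℓ : Q × ℕ | ℓ.2 ≤ kk} := by
          intro y hy
          rcases hy with rfl | hy
          · exact ⟨⟨hℓf, hℓS⟩, hℓk⟩
          · exact ⟨⟨hy.1.1, fun hc => hy.1.2 (absStep_S_mono hm hc)⟩, hy.2⟩
        have h5 := Set.ncard_le_ncard hsub (hWfin.subset Set.inter_subset_right)
        rw [Set.ncard_insert_of_notMem hnotmem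
          (hWfin.subset Set.inter_subset_right)] at h5
        omega
    · intro γ hbl hdem
      obtain ⟨γ1, hr1, hbl1, hdem1⟩ := hsim γ hbl hdem
      obtain ⟨γ2, hr2, hbl2, hdem2⟩ := hsim'' γ1 hbl1 hdem1
      exact ⟨γ2, hr1.trans hr2, hbl2, hdem2⟩

end CutoffAux

/-- Cutoff upper bound (Corollary 4). -/
theorem cutoff_upper_bound {Q D : Type} {dim : ℕ} [DecidableEq Q] [Fintype Q]
    (P : Protocol Q D dim) (qerr : Q) (k : ℕ)
    (hcov : ∃ σ : Abs Q dim, AbsReach P (Abs.init P) σ ∧ (qerr, k) ∈ σ.S) :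
    ∃ γ : Conc Q D dim,
      ConcReach P (Conc.init P (2 * Fintype.card Q * (k + 1) + 1)) γ ∧
      0 < γ.loc (qerr, k) := by
  obtain ⟨σf, hreach, hqerr⟩ := hcov
  obtain ⟨c, hsupp, hcard, hsim⟩ := key_sim k hreach {(qerr, k)} (by
    intro ℓ hl
    rw [Multiset.mem_singleton] at hl
    subst hl
    exact ⟨hqerr, le_rfl⟩)
  set N := 2 * Fintype.card Q * (k + 1) + 1 with hN
  have hcard2 : Multiset.card c ≤ N := by
    have h1 : ((σf.S \ (Abs.init P).S) ∩ {ℓ : Q × ℕ | ℓ.2 ≤ k}).ncard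
        ≤ Fintype.card Q * (k + 1) :=
      le_trans (Set.ncard_le_ncard Set.inter_subset_right (win_finite k)) (win_ncard k)
    have h2 : Multiset.card ({(qerr, k)} : Multiset (Q × ℕ)) = 1 := by simp
    have h3 : 2 * Fintype.card Q * (k + 1) = 2 * (Fintype.card Q * (k + 1)) := by ring
    omega
  have hdem0 : ∀ ℓ, c.count ℓ ≤ (Conc.init P N).loc ℓ := by
    intro ℓ
    by_cases h : ℓ = (P.q0, 0)
    · subst h
      have h2 : (Conc.init P N).loc (P.q0, 0) = N := by simp [Conc.init]
      rw [h2]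
      exact le_trans (Multiset.count_le_card _ _) hcard2
    · have hnm : ℓ ∉ c := fun hc => h (hsupp ℓ hc).1
      rw [Multiset.count_eq_zero.mpr hnm]
      exact Nat.zero_le _
  have hbl0 : Blankish P (Abs.init P).W (Conc.init P N) := fun _ _ h => absurd rfl h
  obtain ⟨γ', hr, _, hdem'⟩ := hsim (Conc.init P N) hbl0 hdem0
  refine ⟨γ', hr, ?_⟩
  have h4 := hdem' (qerr, k)
  have h5 : ({(qerr, k)} : Multiset (Q × ℕ)).count (qerr, k) = 1 := by simp
  omega
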